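/- (Bendixson rectangle) Let n ≥ 1, A ∈ ℂ^{n×n}, H = (A + A*)/2 and K = (A − A*)/(2i). Let α и β be respectively the smallest and largest eigenvalues of the Hermitian matrix H, and let γ and δ be respectively the smallest and largest eigenvalues of the Hermitian matrix K. Then every z ∈ F(A) satisfies α ≤ Re(z) ≤ β and γ ≤ Im(z) ≤ δ; that is, F(A) is contained in the rectangle [α, β] × [γ, δ] of the complex plane. -/

import Mathlib

/-!
A Hermitian matrix `M` whose real spectrum lies in `[a, b]` satisfies `a • 1 ≤ M ≤ b • 1` in the
Loewner order (continuous functional calculus), so `a ≤ Re ⟨x, M x⟩ ≤ b` for every unit vector `x`.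
Apply this to `H` and `K`: `Re ⟨x, A x⟩ = ⟨x, H x⟩` and `Im ⟨x, A x⟩ = ⟨x, K x⟩`, because `K` is the
Hermitian part of `-i A`.
-/

open Matrix

/-- The quadratic form x*Ax = ⟨x, Ax⟩ for A ∈ ℂ^{n×n} and x ∈ ℂⁿ. -/
noncomputable def qf {n : ℕ} (A : Matrix (Fin n) (Fin n) ℂ) (x : EuclideanSpace ℂ (Fin n)) : ℂ :=
  inner ℂ x (Matrix.toEuclideanLin A x)

/-- The field of values (numerical range) F(A) = { x*Ax : ‖x‖ = 1 }. -/
noncomputable def numericalRange {n : ℕ} (A : Matrix (Fin n) (Fin n) ℂ) : Set ℂ :=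
  { z | ∃ x : EuclideanSpace ℂ (Fin n), ‖x‖ = 1 ∧ qf A x = z }

/-- The Hermitian part H = (A + A*)/2. -/
noncomputable def hermPart {n : ℕ} (A : Matrix (Fin n) (Fin n) ℂ) : Matrix (Fin n) (Fin n) ℂ :=
  (2 : ℂ)⁻¹ • (A + Aᴴ)

/-- The skew part K = (A − A*)/(2i). -/
noncomputable def skewPart {n : ℕ} (A : Matrix (Fin n) (Fin n) ℂ) : Matrix (Fin n) (Fin n) ℂ :=
  (2 * Complex.I)⁻¹ • (A - Aᴴ)

/-- The Hermitian matrix flow A(t) = cos(t)·H + sin(t)·K. -/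
noncomputable def matFlow {n : ℕ} (A : Matrix (Fin n) (Fin n) ℂ) (t : ℝ) : Matrix (Fin n) (Fin n) ℂ :=
  (Real.cos t : ℂ) • hermPart A + (Real.sin t : ℂ) • skewPart A

open scoped MatrixOrder ComplexOrder

section SpectrumBounds

variable {𝕜 ι : Type*} [RCLike 𝕜] [Fintype ι] [DecidableEq ι] {M : Matrix ι ι 𝕜}

lemma Matrix.IsHermitian.posSemidef_sub_smul_one (hM : M.IsHermitian) {a : ℝ}
    (ha : a ∈ lowerBounds (spectrum ℝ M)) : (M - a • 1).PosSemidef := by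
  simpa [Matrix.le_iff, Algebra.algebraMap_eq_smul_one] using
    (algebraMap_le_iff_le_spectrum (A := Matrix ι ι 𝕜) hM.isSelfAdjoint).2 ha

lemma Matrix.IsHermitian.posSemidef_smul_one_sub (hM : M.IsHermitian) {b : ℝ}
    (hb : b ∈ upperBounds (spectrum ℝ M)) : (b • 1 - M).PosSemidef := by
  simpa [Matrix.le_iff, Algebra.algebraMap_eq_smul_one] using
    (le_algebraMap_iff_spectrum_le (A := Matrix ι ι 𝕜) hM.isSelfAdjoint).2 hb

end SpectrumBounds

lemma setOf_ofReal_mem_spectrum {ι : Type*} [Fintype ι] [DecidableEq ι] (M : Matrix ι ι ℂ) :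
    {r : ℝ | (r : ℂ) ∈ spectrum ℂ M} = spectrum ℝ M :=
  spectrum.preimage_algebraMap ℂ

section QuadraticForm

variable {n : ℕ}

lemma qf_smul (c : ℂ) (M : Matrix (Fin n) (Fin n) ℂ) (x : EuclideanSpace ℂ (Fin n)) :
    qf (c • M) x = c * qf M x := by
  simp [qf]

lemma qf_add (M N : Matrix (Fin n) (Fin n) ℂ) (x : EuclideanSpace ℂ (Fin n)) :
    qf (M + N) x = qf M x + qf N x := by
  simp [qf]

lemma qf_sub (M N : Matrix (Fin n) (Fin n) ℂ) (x : EuclideanSpace ℂ (Fin n)) :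
    qf (M - N) x = qf M x - qf N x := by
  simp [qf]

lemma qf_one (x : EuclideanSpace ℂ (Fin n)) : qf 1 x = (‖x‖ ^ 2 : ℝ) := by
  simp [qf, inner_self_eq_norm_sq_to_K]

lemma qf_conjTranspose (M : Matrix (Fin n) (Fin n) ℂ) (x : EuclideanSpace ℂ (Fin n)) :
    qf Mᴴ x = starRingEnd ℂ (qf M x) := by
  rw [qf, qf, Matrix.toEuclideanLin_conjTranspose_eq_adjoint, LinearMap.adjoint_inner_right,
    inner_conj_symm]

lemma Matrix.PosSemidef.re_qf_nonneg {M : Matrix (Fin n) (Fin n) ℂ} (hM : M.PosSemidef)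
    (x : EuclideanSpace ℂ (Fin n)) : 0 ≤ (qf M x).re := by
  simpa [qf, EuclideanSpace.inner_eq_star_dotProduct, dotProduct_comm] using
    hM.re_dotProduct_nonneg x.ofLp

lemma Matrix.IsHermitian.le_re_qf {M : Matrix (Fin n) (Fin n) ℂ} (hM : M.IsHermitian) {a : ℝ}
    (ha : a ∈ lowerBounds (spectrum ℝ M)) {x : EuclideanSpace ℂ (Fin n)} (hx : ‖x‖ = 1) :
    a ≤ (qf M x).re := by
  have := (hM.posSemidef_sub_smul_one ha).re_qf_nonneg x
  rw [RCLike.real_smul_eq_coe_smul (K := ℂ), qf_sub, qf_smul, qf_one, hx] at this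
  simpa using this

lemma Matrix.IsHermitian.re_qf_le {M : Matrix (Fin n) (Fin n) ℂ} (hM : M.IsHermitian) {b : ℝ}
    (hb : b ∈ upperBounds (spectrum ℝ M)) {x : EuclideanSpace ℂ (Fin n)} (hx : ‖x‖ = 1) :
    (qf M x).re ≤ b := by
  have := (hM.posSemidef_smul_one_sub hb).re_qf_nonneg x
  rw [RCLike.real_smul_eq_coe_smul (K := ℂ), qf_sub, qf_smul, qf_one, hx] at this
  simpa using this

end QuadraticForm

section HermitianAndSkewParts

variable {n : ℕ} (A : Matrix (Fin n) (Fin n) ℂ)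

lemma hermPart_isHermitian : (hermPart A).IsHermitian := by
  simp [hermPart, Matrix.IsHermitian, add_comm]

lemma skewPart_eq_hermPart_neg_I_smul : skewPart A = hermPart (-Complex.I • A) := by
  ext i j
  simp [skewPart, hermPart]
  ring

lemma skewPart_isHermitian : (skewPart A).IsHermitian :=
  skewPart_eq_hermPart_neg_I_smul A ▸ hermPart_isHermitian _

lemma re_qf_hermPart (x : EuclideanSpace ℂ (Fin n)) : (qf (hermPart A) x).re = (qf A x).re := by
  simp only [hermPart, qf_smul, qf_add, qf_conjTranspose, Complex.add_conj]
  simp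

lemma re_qf_skewPart (x : EuclideanSpace ℂ (Fin n)) : (qf (skewPart A) x).re = (qf A x).im := by
  rw [skewPart_eq_hermPart_neg_I_smul, re_qf_hermPart, qf_smul]
  simp

end HermitianAndSkewParts

theorem bendixson_rectangle_general (n : ℕ) (A : Matrix (Fin n) (Fin n) ℂ)
    (α β γ δ : ℝ)
    (hα : IsLeast {r : ℝ | (r : ℂ) ∈ spectrum ℂ (hermPart A)} α)
    (hβ : IsGreatest {r : ℝ | (r : ℂ) ∈ spectrum ℂ (hermPart A)} β)
    (hγ : IsLeast {r : ℝ | (r : ℂ) ∈ spectrum ℂ (skewPart A)} γ)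
    (hδ : IsGreatest {r : ℝ | (r : ℂ) ∈ spectrum ℂ (skewPart A)} δ) :
    ∀ z ∈ numericalRange A, α ≤ z.re ∧ z.re ≤ β ∧ γ ≤ z.im ∧ z.im ≤ δ := by
  rintro z ⟨x, hx, rfl⟩
  rw [setOf_ofReal_mem_spectrum] at hα hβ hγ hδ
  have hH := hermPart_isHermitian A
  have hK := skewPart_isHermitian A
  rw [← re_qf_hermPart, ← re_qf_skewPart]
  exact ⟨hH.le_re_qf hα.2 hx, hH.re_qf_le hβ.2 hx, hK.le_re_qf hγ.2 hx, hK.re_qf_le hδ.2 hx⟩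

/-- Bendixson rectangle: with α, β the smallest and largest eigenvalues of
H = (A+A*)/2 and γ, δ those of K = (A−A*)/(2i), every z ∈ F(A) satisfies
α ≤ Re z ≤ β and γ ≤ Im z ≤ δ. -/
theorem bendixson_rectangle (n : ℕ) (hn : 1 ≤ n) (A : Matrix (Fin n) (Fin n) ℂ)
    (α β γ δ : ℝ)
    (hα : IsLeast {r : ℝ | (r : ℂ) ∈ spectrum ℂ (hermPart A)} α)
    (hβ : IsGreatest {r : ℝ | (r : ℂ) ∈ spectrum ℂ (hermPart A)} β)
    (hγ : IsLeast {r : ℝ | (r : ℂ) ∈ spectrum ℂ (skewPart A)} γ)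
    (hδ : IsGreatest {r : ℝ | (r : ℂ) ∈ spectrum ℂ (skewPart A)} δ) :
    ∀ z ∈ numericalRange A, α ≤ z.re ∧ z.re ≤ β ∧ γ ≤ z.im ∧ z.im ≤ δ :=
  bendixson_rectangle_general n A α β γ δ hα hβ hγ hδ
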